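/- Let Y ⊆ ℝⁿ be nonempty and Φ₁, Φ₂ : Y → I(ℝ) be interval-valued functions that are gH-weak subdifferentiable at u ∈ Y. Suppose u is a weak efficient point of the interval-valued function y ↦ Φ₂(y) ⊖_gH Φ₁(y), and suppose either w(Φ₁(y)) ≥ w(Φ₂(y)) for all y ∈ Y or w(Φ₁(y)) ≤ w(Φ₂(y)) for all y ∈ Y, where w([a,b]) = b − a denotes the width of an interval. Then ∂ʷΦ₁(u) ⊆ ∂ʷΦ₂(u). -/

import Mathlib

/-- A compact real interval `[lo, hi]` with `lo ≤ hi`. -/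
structure IInt where
  lo : ℝ
  hi : ℝ
  isLe : lo ≤ hi

namespace IInt

/-- Dominance order on intervals: `[a,b] ⪯ [c,d]` iff `a ≤ c` and `b ≤ d`. -/
def ile (X Y : IInt) : Prop := X.lo ≤ Y.lo ∧ X.hi ≤ Y.hi

/-- Interval addition `⊕`. -/
def add (X Y : IInt) : IInt := ⟨X.lo + Y.lo, X.hi + Y.hi, add_le_add X.isLe Y.isLe⟩

/-- gH-difference `⊖_gH`. -/
def gH (X Y : IInt) : IInt :=
  ⟨min (X.lo - Y.lo) (X.hi - Y.hi), max (X.lo - Y.lo) (X.hi - Y.hi), min_le_max⟩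

/-- Scalar multiplication `λ ⊙ [a,b]`：`[λa, λb]` for `λ ≥ 0` and `[λb, λa]` for `λ < 0`. -/
def smul (l : ℝ) (X : IInt) : IInt :=
  ⟨min (l * X.lo) (l * X.hi), max (l * X.lo) (l * X.hi), min_le_max⟩

/-- Inclusion of intervals: `[a,b] ⊆ [c,d]` iff `c ≤ a` and `b ≤ d`. -/
def subset (X Y : IInt) : Prop := Y.lo ≤ X.lo ∧ X.hi ≤ Y.hi

/-- Norm on `I(ℝ)`: `‖[a,b]‖ = max |a| |b|`. -/
def inorm (X : IInt) : ℝ := max |X.lo| |X.hi|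

/-- The degenerate interval `[r, r]`. -/
def ofReal (r : ℝ) : IInt := ⟨r, r, le_refl r⟩

/-- Width of an interval. -/
def width (X : IInt) : ℝ := X.hi - X.lo

end IInt

/-- The product `Ĝ⊤ ⊙ d` of an interval vector and a real vector. -/
def iprod {n : ℕ} (G : Fin n → IInt) (d : EuclideanSpace ℝ (Fin n)) : IInt :=
  ⟨∑ i, min (d i * (G i).lo) (d i * (G i).hi),
   ∑ i, max (d i * (G i).lo) (d i * (G i).hi),
   Finset.sum_le_sum fun _ _ => min_le_max⟩

/-- `(Ĝ, c)` is a gH-weak subgradient of `Φ` at `u` relative to `Y`. -/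
def IsWeakSubgrad {n : ℕ} (Y : Set (EuclideanSpace ℝ (Fin n)))
    (Φ : EuclideanSpace ℝ (Fin n) → IInt) (u : EuclideanSpace ℝ (Fin n))
    (G : Fin n → IInt) (c : ℝ) : Prop :=
  0 ≤ c ∧ ∀ y ∈ Y,
    IInt.ile (IInt.gH (iprod G (y - u)) (IInt.ofReal (c * ‖y - u‖))) (IInt.gH (Φ y) (Φ u))

/-- `(Ĥ, c')` belongs to the augmented normal cone to `Y` at `u`. -/
def InAugNormalCone {n : ℕ} (Y : Set (EuclideanSpace ℝ (Fin n)))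
    (u : EuclideanSpace ℝ (Fin n)) (H : Fin n → IInt) (c' : ℝ) : Prop :=
  0 ≤ c' ∧ ∀ y ∈ Y,
    IInt.ile (IInt.gH (iprod H (y - u)) (IInt.ofReal (c' * ‖y - u‖))) (IInt.ofReal 0)

/-
When the widths of `Φ₁` and `Φ₂` are ordered the same way at two points, the gH-differences
`Φ₂ ⊖_gH Φ₁` at those points are taken endpoint by endpoint in the same orientation, so weak
efficiency of `u` says that both endpoints of `Φ₂ - Φ₁` grow from `u` to `y`. Rearranged, the
endpoints of `Φ₁` grow by less than those of `Φ₂`, i.e. `Φ₁ y ⊖_gH Φ₁ u ⪯ Φ₂ y ⊖_gH Φ₂ u`,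
and a gH-weak subgradient of `Φ₁` at `u` is one of `Φ₂` by transitivity of `⪯`.
-/

namespace IInt

theorem ile_trans {X Y Z : IInt} (hXY : ile X Y) (hYZ : ile Y Z) : ile X Z :=
  ⟨hXY.1.trans hYZ.1, hXY.2.trans hYZ.2⟩

theorem gH_ile_gH_of_sub_le_sub {A B C D : IInt} (hlo : A.lo - B.lo ≤ C.lo - D.lo)
    (hhi : A.hi - B.hi ≤ C.hi - D.hi) : ile (gH A B) (gH C D) :=
  ⟨min_le_min hlo hhi, max_le_max hlo hhi⟩

theorem gH_of_width_le {X Y : IInt} (h : width X ≤ width Y) :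
    (gH X Y).lo = X.hi - Y.hi ∧ (gH X Y).hi = X.lo - Y.lo := by
  unfold width at h
  exact ⟨min_eq_right (by linarith), max_eq_left (by linarith)⟩

theorem gH_of_le_width {X Y : IInt} (h : width Y ≤ width X) :
    (gH X Y).lo = X.lo - Y.lo ∧ (gH X Y).hi = X.hi - Y.hi := by
  unfold width at h
  exact ⟨min_eq_left (by linarith), max_eq_right (by linarith)⟩

theorem gH_ile_gH_of_gH_ile_gH {A B C D : IInt}
    (hw : (width C ≤ width A ∧ width D ≤ width B) ∨ (width A ≤ width C ∧ width B ≤ width D))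
    (h : ile (gH D B) (gH C A)) : ile (gH A B) (gH C D) := by
  obtain ⟨hlo, hhi⟩ := h
  rcases hw with ⟨hCA, hDB⟩ | ⟨hAC, hBD⟩
  · rw [(gH_of_width_le hCA).1, (gH_of_width_le hDB).1] at hlo
    rw [(gH_of_width_le hCA).2, (gH_of_width_le hDB).2] at hhi
    exact gH_ile_gH_of_sub_le_sub (by linarith) (by linarith)
  · rw [(gH_of_le_width hAC).1, (gH_of_le_width hBD).1] at hlo
    rw [(gH_of_le_width hAC).2, (gH_of_le_width hBD).2] at hhi
    exact gH_ile_gH_of_sub_le_sub (by linarith) (by linarith)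

end IInt

theorem IsWeakSubgrad.mono {n : ℕ} {Y : Set (EuclideanSpace ℝ (Fin n))}
    {Φ₁ Φ₂ : EuclideanSpace ℝ (Fin n) → IInt} {u : EuclideanSpace ℝ (Fin n)}
    {G : Fin n → IInt} {c : ℝ} (hG : IsWeakSubgrad Y Φ₁ u G c)
    (hΦ : ∀ y ∈ Y, IInt.ile (IInt.gH (Φ₁ y) (Φ₁ u)) (IInt.gH (Φ₂ y) (Φ₂ u))) :
    IsWeakSubgrad Y Φ₂ u G c :=
  ⟨hG.1, fun y hy => IInt.ile_trans (hG.2 y hy) (hΦ y hy)⟩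

theorem stmt_17_general {n : ℕ} (Y : Set (EuclideanSpace ℝ (Fin n)))
    (Φ₁ Φ₂ : EuclideanSpace ℝ (Fin n) → IInt) (u : EuclideanSpace ℝ (Fin n)) (hu : u ∈ Y)
    (hweak : ∀ y ∈ Y, IInt.ile (IInt.gH (Φ₂ u) (Φ₁ u)) (IInt.gH (Φ₂ y) (Φ₁ y)))
    (hw : (∀ y ∈ Y, IInt.width (Φ₂ y) ≤ IInt.width (Φ₁ y)) ∨
          (∀ y ∈ Y, IInt.width (Φ₁ y) ≤ IInt.width (Φ₂ y))) :
    ∀ G c, IsWeakSubgrad Y Φ₁ u G c → IsWeakSubgrad Y Φ₂ u G c := by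
  intro G c hG
  refine hG.mono fun y hy => IInt.gH_ile_gH_of_gH_ile_gH ?_ (hweak y hy)
  rcases hw with hw | hw
  · exact Or.inl ⟨hw y hy, hw u hu⟩
  · exact Or.inr ⟨hw y hy, hw u hu⟩

/-- if `Φ₁, Φ₂` are gH-weak subdifferentiable at `u`, `u` is a weak efficient
point of `Φ₂ ⊖_gH Φ₁`, and the widths are uniformly comparable on `Y`, then
`∂ʷΦ₁(u) ⊆ ∂ʷΦ₂(u)`. -/
theorem stmt_17 {n : ℕ} (Y : Set (EuclideanSpace ℝ (Fin n))) (hY : Y.Nonempty)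
    (Φ₁ Φ₂ : EuclideanSpace ℝ (Fin n) → IInt) (u : EuclideanSpace ℝ (Fin n)) (hu : u ∈ Y)
    (h1 : ∃ G c, IsWeakSubgrad Y Φ₁ u G c) (h2 : ∃ G c, IsWeakSubgrad Y Φ₂ u G c)
    (hweak : ∀ y ∈ Y, IInt.ile (IInt.gH (Φ₂ u) (Φ₁ u)) (IInt.gH (Φ₂ y) (Φ₁ y)))
    (hw : (∀ y ∈ Y, IInt.width (Φ₂ y) ≤ IInt.width (Φ₁ y)) ∨
          (∀ y ∈ Y, IInt.width (Φ₁ y) ≤ IInt.width (Φ₂ y))) :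
    ∀ G c, IsWeakSubgrad Y Φ₁ u G c → IsWeakSubgrad Y Φ₂ u G c :=
  stmt_17_general Y Φ₁ Φ₂ u hu hweak hw
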